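/- arXiv:2101.07236 — 2 statements merged into one kernel-verified Lean document; each statement's English description precedes it below -/
import Mathlib

section
/- Let N = R + iI be a complex symmetric n×n matrix with R, I real symmetric and I positive definite. Define the real 2n×2n matrix J (in n×n block form) by J = [[I^{-1}R, I^{-1}], [-I - R I^{-1} R, -R I^{-1}]]. Then J² = -Id_{2n}, J is a symplectomorphism of the standard symplectic form ω_{2n} on ℝ^{2n} (i.e. ω_{2n}(Jx, Jy) = ω_{2n}(x,y) for all x,y), and the bilinear form (x,y) ↦ ω_{2n}(Jx, y) is symmetric and positive definite. In other words, J is a taming of ω_{2n}. -/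
/-!
The Gram matrix `Jᵀ Ω` is congruent, via the shear `S = [[1, 0], [R, 1]]`, to the block
diagonal `diag(I, I⁻¹)`: `Jᵀ Ω = Sᵀ diag(I, I⁻¹) S`, so it is positive definite. Compatibility
with `Ω` then comes for free: `Ω` is skew and `Jᵀ Ω` symmetric, so `Jᵀ Ω = -Ω J`, and
`J² = -1` gives `Jᵀ Ω J = -Ω J² = Ω`.
-/

open Matrix

/-- The matrix of the standard symplectic form `ω_{2n}` on `ℝ^{2n} = ℝ^n ⊕ ℝ^n`:
`Ω = [[0, I_n], [-I_n, 0]]`, so that `ω(x,y) = xᵀ Ω y`. -/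
def OmegaMat (n : ℕ) : Matrix (Fin n ⊕ Fin n) (Fin n ⊕ Fin n) ℝ :=
  Matrix.fromBlocks 0 1 (-1) 0

namespace Matrix

variable {m o ι K : Type*} [Fintype m] [Fintype o] [Fintype ι] [DecidableEq ι]

theorem PosDef.fromBlocks_zero_zero [CommRing K] [PartialOrder K] [StarRing K]
    [IsOrderedAddMonoid K] {A : Matrix m m K} {D : Matrix o o K}
    (hA : A.PosDef) (hD : D.PosDef) : (fromBlocks A 0 0 D).PosDef := by
  refine .of_dotProduct_mulVec_pos (hA.isHermitian.fromBlocks (by simp) hD.isHermitian)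
    fun x hx => ?_
  rw [← Sum.elim_comp_inl_inr x, fromBlocks_mulVec]
  simp only [zero_mulVec, add_zero, zero_add, Function.star_sumElim, sumElim_dotProduct_sumElim]
  have hx' : x ∘ Sum.inl ≠ 0 ∨ x ∘ Sum.inr ≠ 0 := by
    by_contra! h
    exact hx (by rw [← Sum.elim_comp_inl_inr x, h.1, h.2]; ext (_ | _) <;> rfl)
  rcases hx' with h | h
  · exact add_pos_of_pos_of_nonneg (hA.dotProduct_mulVec_pos h)
      (hD.posSemidef.dotProduct_mulVec_nonneg _)
  · exact add_pos_of_nonneg_of_pos (hA.posSemidef.dotProduct_mulVec_nonneg _)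
      (hD.dotProduct_mulVec_pos h)

theorem transpose_mul_mul_self_eq_of_isSymm [CommRing K] {Ω J : Matrix ι ι K}
    (hΩ : Ωᵀ = -Ω) (hJ : J * J = -1) (hsymm : (Jᵀ * Ω).IsSymm) : Jᵀ * Ω * J = Ω := by
  have hswap : Jᵀ * Ω = -(Ω * J) := by
    conv_lhs => rw [← hsymm.eq, transpose_mul, transpose_transpose, hΩ, neg_mul]
  rw [hswap, neg_mul, mul_assoc, hJ, mul_neg, mul_one, neg_neg]

end Matrix

theorem OmegaMat_transpose (n : ℕ) : (OmegaMat n)ᵀ = -OmegaMat n := by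
  simp [OmegaMat, fromBlocks_transpose, fromBlocks_neg]

section PeriodComplexStructure

variable {ι K : Type*} [Fintype ι] [DecidableEq ι] [CommRing K]

noncomputable def periodComplexStructure (R I : Matrix ι ι K) : Matrix (ι ⊕ ι) (ι ⊕ ι) K :=
  fromBlocks (I⁻¹ * R) I⁻¹ (-I - R * I⁻¹ * R) (-(R * I⁻¹))

variable {R I : Matrix ι ι K}

theorem periodComplexStructure_mul_self (hI : IsUnit I.det) :
    periodComplexStructure R I * periodComplexStructure R I = -1 := by
  simp only [periodComplexStructure, fromBlocks_multiply, ← fromBlocks_one, fromBlocks_neg,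
    Matrix.mul_sub, Matrix.sub_mul, Matrix.mul_neg, Matrix.neg_mul, Matrix.mul_assoc,
    mul_nonsing_inv I hI, nonsing_inv_mul I hI, mul_nonsing_inv_cancel_left _ _ hI,
    Matrix.mul_one]
  congr 1 <;> abel

theorem transpose_periodComplexStructure_mul_fromBlocks (hR : R.IsSymm) (hI : I.IsSymm) :
    (periodComplexStructure R I)ᵀ * fromBlocks 0 1 (-1) 0 =
      (fromBlocks 1 0 R 1)ᵀ * fromBlocks I 0 0 I⁻¹ * fromBlocks 1 0 R 1 := by
  have hinv : I⁻¹ᵀ = I⁻¹ := by rw [transpose_nonsing_inv, hI.eq]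
  simp only [periodComplexStructure, fromBlocks_transpose, fromBlocks_multiply, hR.eq, hI.eq,
    hinv, transpose_neg, transpose_sub, transpose_mul, transpose_zero, transpose_one,
    Matrix.mul_assoc, Matrix.mul_zero, Matrix.zero_mul, Matrix.mul_one, Matrix.one_mul,
    Matrix.mul_neg, add_zero, zero_add, neg_neg, neg_sub, sub_neg_eq_add]
  rw [add_comm]

end PeriodComplexStructure

/-- Let `N = R + iI` be a complex symmetric matrix with `R, I` real symmetric and `I`
positive definite, and set `J = [[I⁻¹R, I⁻¹], [-I - R I⁻¹ R, -R I⁻¹]]`.  Then `J² = -1`,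
`J` is a symplectomorphism of `ω_{2n}` (i.e. `Jᵀ Ω J = Ω`, so `ω(Jx,Jy) = ω(x,y)`), and
the bilinear form `(x,y) ↦ ω(Jx,y)`, whose matrix is `Jᵀ Ω`, is symmetric and positive
definite.  In other words, `J` is a taming of `ω_{2n}`. -/
theorem period_matrix_gives_taming (n : ℕ)
    (R I : Matrix (Fin n) (Fin n) ℝ)
    (hR : R.IsSymm) (hI : I.IsSymm) (hIpd : I.PosDef)
    (J : Matrix (Fin n ⊕ Fin n) (Fin n ⊕ Fin n) ℝ)
    (hJ : J = Matrix.fromBlocks (I⁻¹ * R) I⁻¹ (-I - R * I⁻¹ * R) (-(R * I⁻¹))) :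
    J * J = -1 ∧ Jᵀ * OmegaMat n * J = OmegaMat n ∧ (Jᵀ * OmegaMat n).PosDef := by
  change J = periodComplexStructure R I at hJ
  subst hJ
  have hsq := periodComplexStructure_mul_self (R := R) ((isUnit_iff_isUnit_det I).mp hIpd.isUnit)
  have hshear : IsUnit (fromBlocks 1 0 R 1 : Matrix (Fin n ⊕ Fin n) (Fin n ⊕ Fin n) ℝ) := by
    simp [isUnit_iff_isUnit_det]
  have hpos : ((periodComplexStructure R I)ᵀ * OmegaMat n).PosDef := by
    rw [OmegaMat, transpose_periodComplexStructure_mul_fromBlocks hR hI]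
    exact hshear.posDef_star_left_conjugate_iff.2 (hIpd.fromBlocks_zero_zero hIpd.inv)
  exact ⟨hsq, transpose_mul_mul_self_eq_of_isSymm (OmegaMat_transpose n) hsq
    (isHermitian_iff_isSymm.mp hpos.isHermitian), hpos⟩
end

section
/- Let * be a linear involution-up-to-sign operator on a real vector space W (i.e. *² = -Id_W, modeling the Lorentzian Hodge star on 2-forms), let N = R + iI ∈ SH_n determine J as above acting on W ⊗ ℝ^{2n} = (W ⊗ ℝ^n) ⊕ (W ⊗ ℝ^n), and for F ∈ W ⊗ ℝ^n set G(N,F) := -R F - I (*F). Then an element V = (F, G) of (W ⊗ ℝ^n) ⊕ (W ⊗ ℝ^n) satisfies *V = -J V if and only if G = G(N,F). Moreover F is uniquely determined by V. -/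
/-- Action of an `n×n` real matrix on `W ⊗ ℝ^n ≅ (Fin n → W)`. -/
def matAct (n : ℕ) (W : Type) [AddCommGroup W] [Module ℝ W]
    (A : Matrix (Fin n) (Fin n) ℝ) (F : Fin n → W) : Fin n → W :=
  fun i => ∑ j, A i j • F j

section aux
variable {n : ℕ} {W : Type} [AddCommGroup W] [Module ℝ W]

lemma matAct_mul (A B : Matrix (Fin n) (Fin n) ℝ) (F : Fin n → W) :
    matAct n W (A * B) F = matAct n W A (matAct n W B F) := by
  funext i
  simp only [matAct, Matrix.mul_apply, Finset.sum_smul, Finset.smul_sum, smul_smul]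
  exact Finset.sum_comm

lemma matAct_one (F : Fin n → W) : matAct n W 1 F = F := by
  funext i
  simp [matAct, Matrix.one_apply]

lemma matAct_add (A : Matrix (Fin n) (Fin n) ℝ) (F G : Fin n → W) :
    matAct n W A (F + G) = matAct n W A F + matAct n W A G := by
  funext i
  simp [matAct, smul_add, Finset.sum_add_distrib]

lemma matAct_neg (A : Matrix (Fin n) (Fin n) ℝ) (F : Fin n → W) :
    matAct n W A (-F) = -matAct n W A F := by
  funext i
  simp [matAct, Finset.sum_neg_distrib]

lemma matAct_sub (A : Matrix (Fin n) (Fin n) ℝ) (F G : Fin n → W) :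
    matAct n W A (F - G) = matAct n W A F - matAct n W A G := by
  rw [sub_eq_add_neg, matAct_add, matAct_neg, sub_eq_add_neg]

lemma matAct_negA (A : Matrix (Fin n) (Fin n) ℝ) (F : Fin n → W) :
    matAct n W (-A) F = -matAct n W A F := by
  funext i
  simp [matAct]

lemma matAct_addA (A B : Matrix (Fin n) (Fin n) ℝ) (F : Fin n → W) :
    matAct n W (A + B) F = matAct n W A F + matAct n W B F := by
  funext i
  simp [matAct, add_smul, Finset.sum_add_distrib]

lemma matAct_subA (A B : Matrix (Fin n) (Fin n) ℝ) (F : Fin n → W) :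
    matAct n W (A - B) F = matAct n W A F - matAct n W B F := by
  rw [sub_eq_add_neg, matAct_addA, matAct_negA, sub_eq_add_neg]

lemma matAct_st (st : W →ₗ[ℝ] W) (A : Matrix (Fin n) (Fin n) ℝ) (F : Fin n → W) :
    matAct n W A (fun j => st (F j)) = fun i => st (matAct n W A F i) := by
  funext i
  simp [matAct, map_sum, map_smul]

end aux

/-- Pointwise form of the polarized self-duality condition.  Let `st` be a linear operator
on `W` with `st² = -Id` (the Lorentzian Hodge star on 2-forms), let `N = R + iI` with
`R, I` symmetric and `I` positive definite, determining the taming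
`J = [[I⁻¹R, I⁻¹], [-I - R I⁻¹ R, -R I⁻¹]]` acting on `(W ⊗ ℝ^n) ⊕ (W ⊗ ℝ^n)`, and for
`F ∈ W ⊗ ℝ^n` set `G(N,F) = -R F - I (st F)`.  Then `V = (F, G)` satisfies `st V = -J V`
if and only if `G = G(N,F)`; moreover `F` is uniquely determined by `V`. -/
theorem polarized_selfduality_iff_G (n : ℕ) (W : Type) [AddCommGroup W] [Module ℝ W]
    (st : W →ₗ[ℝ] W) (hst : ∀ w, st (st w) = -w)
    (R I : Matrix (Fin n) (Fin n) ℝ)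
    (hR : R.IsSymm) (hI : I.IsSymm) (hIpd : I.PosDef) :
    (∀ F G : Fin n → W,
      (((fun i => st (F i)) = -(matAct n W (I⁻¹ * R) F + matAct n W I⁻¹ G)) ∧
       ((fun i => st (G i)) =
          -(matAct n W (-I - R * I⁻¹ * R) F + matAct n W (-(R * I⁻¹)) G)))
      ↔ G = -(matAct n W R F) - matAct n W I (fun j => st (F j))) ∧
    (∀ F F' : Fin n → W,
      ((F, -(matAct n W R F) - matAct n W I fun j => st (F j)) :
          (Fin n → W) × (Fin n → W)) =
        (F', -(matAct n W R F') - matAct n W I fun j => st (F' j)) → F = F') := by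
  have hdet : IsUnit I.det := isUnit_iff_ne_zero.mpr hIpd.det_pos.ne'
  have hIinv : I * I⁻¹ = 1 := Matrix.mul_nonsing_inv I hdet
  have hIinv' : I⁻¹ * I = 1 := Matrix.nonsing_inv_mul I hdet
  constructor
  · intro F G
    constructor
    · rintro ⟨h1, _⟩
      -- apply matAct I to h1
      have h2 := congrArg (matAct n W I) h1
      rw [matAct_neg, matAct_add, ← matAct_mul, ← matAct_mul,
        ← Matrix.mul_assoc, hIinv, Matrix.one_mul, matAct_one] at h2
      -- h2 : matAct I (st ∘ F) = -(matAct R F + G)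
      have h3 : matAct n W I (fun j => st (F j)) = -matAct n W R F - G := by
        rw [h2]; abel
      rw [h3]; abel
    · intro hG
      subst hG
      have key1 : (fun i => st (F i)) =
          -(matAct n W (I⁻¹ * R) F +
            matAct n W I⁻¹ (-(matAct n W R F) - matAct n W I fun j => st (F j))) := by
        rw [matAct_sub, matAct_neg, ← matAct_mul, ← matAct_mul, hIinv', matAct_one]
        abel
      refine ⟨key1, ?_⟩
      -- second equation
      have hstG : (fun i => st ((-(matAct n W R F) - matAct n W I fun j => st (F j)) i)) =
          -(matAct n W R (fun j => st (F j))) + matAct n W I F := by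
        funext i
        have : (-(matAct n W R F) - matAct n W I fun j => st (F j)) i =
            -(matAct n W R F i) - matAct n W I (fun j => st (F j)) i := rfl
        rw [this, map_sub, map_neg]
        have hA : st (matAct n W R F i) = matAct n W R (fun j => st (F j)) i := by
          rw [matAct_st]
        have hB : st (matAct n W I (fun j => st (F j)) i) =
            matAct n W I (fun j => st (st (F j))) i := by
          rw [matAct_st st I (fun j => st (F j))]
        have hC : matAct n W I (fun j => st (st (F j))) = -matAct n W I F := by
          have : (fun j => st (st (F j))) = -F := by funext j; rw [hst]; rfl
          rw [this, matAct_neg]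
        rw [hA, hB, hC]
        simp [Pi.neg_apply, Pi.add_apply]
      rw [hstG]
      -- RHS computation
      have e1 : R * I⁻¹ * I = R := by rw [Matrix.mul_assoc, hIinv', Matrix.mul_one]
      rw [matAct_negA, matAct_subA, matAct_negA, matAct_sub, matAct_neg,
        ← matAct_mul, ← matAct_mul, e1]
      abel
  · intro F F' h
    exact congrArg Prod.fst h
end
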